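/- Let γ = (c_1,…,c_n) be a clan that avoids the pattern (1,2,1,2), and suppose that every sign entry of γ lies strictly between the two positions of some pair of γ. Then γ is a concatenation of consecutive blocks, each of which begins and ends with the two occurrences of a single number: that is, there exist indices 1 = i_1 < j_1 < i_2 < j_2 < ⋯ < i_r < j_r = n with j_k + 1 = i_{k+1} for all k, such that each (i_k, j_k) is a pair of γ and every pair of γ has both its positions inside a single interval [i_k, j_k]. -/
import Mathlib


/-- An entry of a clan: a plus sign, a minus sign, or a natural number. -/
inductive CEntry : Type where
  | plus : CEntry
  | minus : CEntry
  | num : ℕ → CEntry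
deriving DecidableEq

/-- Whether an entry is a natural number. -/
def CEntry.isNum : CEntry → Bool
  | .num _ => true
  | _ => false

/-- Whether an entry is a sign (`+` or `−`). -/
def CEntry.isSign : CEntry → Bool
  | .num _ => false
  | _ => true

/-- A clan of signature `(p, q)`: a sequence of `n = p + q` symbols, each `+`, `−`, or a
natural number, such that every natural number occurring in the sequence occurs exactly
twice, and the number of `+` entries plus the number of pairs of equal numbers is `p`. -/
structure Clan (n p q : ℕ) : Type where
  c : Fin n → CEntry
  total : n = p + q
  twice : ∀ a : ℕ, (Finset.univ.filter fun i => c i = CEntry.num a).card = 0 ∨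
      (Finset.univ.filter fun i => c i = CEntry.num a).card = 2
  signature : (Finset.univ.filter fun i => c i = CEntry.plus).card
      + (Finset.univ.filter fun i => (c i).isNum = true).card / 2 = p

namespace Clan

variable {n p q : ℕ}

/-- `(i, j)` is a pair of the clan `γ`: `i < j` and `c i = c j` is a natural number. -/
def IsPair (γ : Clan n p q) (i j : Fin n) : Prop :=
  i < j ∧ γ.c i = γ.c j ∧ (γ.c i).isNum = true

instance (γ : Clan n p q) (i j : Fin n) : Decidable (γ.IsPair i j) := by
  unfold IsPair; infer_instance

/-- The finset of all pairs of the clan `γ`. -/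
def pairs (γ : Clan n p q) : Finset (Fin n × Fin n) :=
  Finset.univ.filter fun x => γ.IsPair x.1 x.2

/-- The contribution `j − i − #{pairs (s,t) of γ with s < i < t < j}` of a pair `(i, j)`
to the dimension of the orbit parametrized by `γ`. -/
def summand (γ : Clan n p q) (x : Fin n × Fin n) : ℕ :=
  (x.2 : ℕ) - (x.1 : ℕ) -
    (γ.pairs.filter fun y => y.1 < x.1 ∧ x.1 < y.2 ∧ y.2 < x.2).card

/-- `d_{p,q} = (p(p−1) + q(q−1))/2`, the dimension of the closed orbits. -/
def dpq (p q : ℕ) : ℕ := (p * (p - 1) + q * (q - 1)) / 2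

/-- The dimension of the `GL_p × GL_q`-orbit on the flag variety parametrized by `γ`. -/
def D (γ : Clan n p q) : ℕ := dpq p q + ∑ x ∈ γ.pairs, γ.summand x

/-- `γ` includes the pattern `(1, +, −, 1)`. -/
def Includes1pm1 (γ : Clan n p q) : Prop :=
  ∃ i k l j : Fin n, i < k ∧ k < l ∧ l < j ∧
    γ.c k = CEntry.plus ∧ γ.c l = CEntry.minus ∧ γ.IsPair i j

/-- `γ` includes the pattern `(1, −, +, 1)`. -/
def Includes1mp1 (γ : Clan n p q) : Prop :=
  ∃ i k l j : Fin n, i < k ∧ k < l ∧ l < j ∧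
    γ.c k = CEntry.minus ∧ γ.c l = CEntry.plus ∧ γ.IsPair i j

/-- `γ` includes the pattern `(1, 2, 1, 2)`. -/
def Includes1212 (γ : Clan n p q) : Prop :=
  ∃ i s j t : Fin n, i < s ∧ s < j ∧ j < t ∧
    γ.IsPair i j ∧ γ.IsPair s t ∧ γ.c i ≠ γ.c s

/-- `γ` includes the pattern `(1, +, 2, 2, 1)`. -/
def Includes1p221 (γ : Clan n p q) : Prop :=
  ∃ i k s t j : Fin n, i < k ∧ k < s ∧ s < t ∧ t < j ∧
    γ.c k = CEntry.plus ∧ γ.IsPair i j ∧ γ.IsPair s t ∧ γ.c i ≠ γ.c s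

/-- `γ` includes the pattern `(1, −, 2, 2, 1)`. -/
def Includes1m221 (γ : Clan n p q) : Prop :=
  ∃ i k s t j : Fin n, i < k ∧ k < s ∧ s < t ∧ t < j ∧
    γ.c k = CEntry.minus ∧ γ.IsPair i j ∧ γ.IsPair s t ∧ γ.c i ≠ γ.c s

/-- `γ` includes the pattern `(1, 2, 2, +, 1)`. -/
def Includes122p1 (γ : Clan n p q) : Prop :=
  ∃ i s t k j : Fin n, i < s ∧ s < t ∧ t < k ∧ k < j ∧
    γ.c k = CEntry.plus ∧ γ.IsPair i j ∧ γ.IsPair s t ∧ γ.c i ≠ γ.c s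

/-- `γ` includes the pattern `(1, 2, 2, −, 1)`. -/
def Includes122m1 (γ : Clan n p q) : Prop :=
  ∃ i s t k j : Fin n, i < s ∧ s < t ∧ t < k ∧ k < j ∧
    γ.c k = CEntry.minus ∧ γ.IsPair i j ∧ γ.IsPair s t ∧ γ.c i ≠ γ.c s

/-- `γ` avoids the seven patterns `(1,+,−,1)`, `(1,−,+,1)`, `(1,2,1,2)`, `(1,+,2,2,1)`,
`(1,−,2,2,1)`, `(1,2,2,+,1)`, `(1,2,2,−,1)`. -/
def AvoidsSeven (γ : Clan n p q) : Prop :=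
  ¬ γ.Includes1pm1 ∧ ¬ γ.Includes1mp1 ∧ ¬ γ.Includes1212 ∧
    ¬ γ.Includes1p221 ∧ ¬ γ.Includes1m221 ∧ ¬ γ.Includes122p1 ∧ ¬ γ.Includes122m1

end Clan

/-- The move replacing a pair of opposite signs of `γ` in positions `i < j` by a pair of
equal numbers not occurring in `γ`, yielding `γ'`. -/
def ReplaceMove {n p q : ℕ} (γ γ' : Clan n p q) : Prop :=
  ∃ i j : Fin n, i < j ∧
    ((γ.c i = CEntry.plus ∧ γ.c j = CEntry.minus) ∨
      (γ.c i = CEntry.minus ∧ γ.c j = CEntry.plus)) ∧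
    (∃ a : ℕ, (∀ k, γ.c k ≠ CEntry.num a) ∧
      γ'.c i = CEntry.num a ∧ γ'.c j = CEntry.num a) ∧
    ∀ k, k ≠ i → k ≠ j → γ'.c k = γ.c k


section BlockAux

variable {n p q : ℕ}

lemma isNum_iff (e : CEntry) : e.isNum = true ↔ ∃ a, e = CEntry.num a := by
  cases e <;> simp [CEntry.isNum]

/-- No natural number occurs at three distinct positions. -/
lemma not_three (γ : Clan n p q) (a : ℕ) (i j k : Fin n) (hij : i ≠ j) (hik : i ≠ k)
    (hjk : j ≠ k) (hi : γ.c i = CEntry.num a) (hj : γ.c j = CEntry.num a)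
    (hk : γ.c k = CEntry.num a) : False := by
  have hsub : ({i, j, k} : Finset (Fin n)) ⊆
      Finset.univ.filter fun m => γ.c m = CEntry.num a := by
    intro m hm
    simp only [Finset.mem_insert, Finset.mem_singleton] at hm
    rcases hm with rfl | rfl | rfl <;> simp [hi, hj, hk]
  have hcard : ({i, j, k} : Finset (Fin n)).card = 3 := by
    rw [Finset.card_insert_of_notMem (by simp [hij, hik]),
      Finset.card_insert_of_notMem (by simp [hjk]), Finset.card_singleton]
  have hle := Finset.card_le_card hsub
  rcases γ.twice a with h | h <;> omega

lemma pair_unique_right (γ : Clan n p q) {i t v : Fin n} (h1 : γ.IsPair i t)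
    (h2 : γ.IsPair i v) : t = v := by
  obtain ⟨a, ha⟩ := (isNum_iff _).mp h1.2.2
  by_contra hne
  exact not_three γ a i t v (Fin.ne_of_lt h1.1) (Fin.ne_of_lt h2.1) hne ha
    (h1.2.1.symm.trans ha) (h2.2.1.symm.trans ha)

lemma no_pair_at_right (γ : Clan n p q) {s t v : Fin n} (h1 : γ.IsPair s t)
    (h2 : γ.IsPair t v) : False := by
  obtain ⟨a, ha⟩ := (isNum_iff _).mp h1.2.2
  have hst : s ≠ t := Fin.ne_of_lt h1.1
  have htv : t ≠ v := Fin.ne_of_lt h2.1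
  have hsv : s ≠ v := Fin.ne_of_lt (h1.1.trans h2.1)
  exact not_three γ a s t v hst hsv htv ha (h1.2.1.symm.trans ha)
    ((h1.2.1.trans h2.2.1).symm.trans ha)

lemma cross_impossible (γ : Clan n p q) (havoid : ¬ γ.Includes1212) {i j u v : Fin n}
    (h1 : γ.IsPair i j) (h2 : γ.IsPair u v) (hiu : i < u) (huj : u < j) (hjv : j < v) :
    False := by
  by_cases hc : γ.c i = γ.c u
  · obtain ⟨a, ha⟩ := (isNum_iff _).mp h1.2.2
    exact not_three γ a i u j (Fin.ne_of_lt hiu) (Fin.ne_of_lt h1.1) (Fin.ne_of_lt huj)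
      ha (hc.symm.trans ha) (h1.2.1.symm.trans ha)
  · exact havoid ⟨i, u, j, v, hiu, huj, hjv, h1, h2, hc⟩

/-- No pair of `γ` straddles position `s`. -/
def Fresh (γ : Clan n p q) (s : ℕ) : Prop :=
  ∀ i j : Fin n, γ.IsPair i j → (i : ℕ) < s → (j : ℕ) < s

lemma exists_pair_start (γ : Clan n p q)
    (hsigns : ∀ k : Fin n, (γ.c k).isSign = true →
      ∃ i j : Fin n, γ.IsPair i j ∧ i < k ∧ k < j)
    {s : ℕ} (hf : Fresh γ s) (hs : s < n) : ∃ t, γ.IsPair ⟨s, hs⟩ t := by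
  set u : Fin n := ⟨s, hs⟩ with hu
  have hsign : ∀ (he : (γ.c u).isSign = true), False := by
    intro he
    obtain ⟨i, j, hp, hik, hkj⟩ := hsigns u he
    have h1 : (i : ℕ) < s := hik
    have h2 : s < (j : ℕ) := hkj
    have := hf i j hp h1
    omega
  cases he : γ.c u with
  | plus => exact absurd (by rw [he]; rfl) (fun h => hsign h)
  | minus => exact absurd (by rw [he]; rfl) (fun h => hsign h)
  | num a =>
    have hmem : u ∈ Finset.univ.filter fun m => γ.c m = CEntry.num a := by simp [he]
    have hcard : (Finset.univ.filter fun m => γ.c m = CEntry.num a).card = 2 := by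
      rcases γ.twice a with h | h
      · exact absurd (Finset.card_eq_zero.mp h) (by intro hz; simp [hz] at hmem)
      · exact h
    have hpos : 0 < ((Finset.univ.filter fun m => γ.c m = CEntry.num a).erase u).card := by
      rw [Finset.card_erase_of_mem hmem, hcard]
      omega
    obtain ⟨t, ht⟩ := Finset.card_pos.mp hpos
    have htmem := Finset.mem_of_mem_erase ht
    have htne : t ≠ u := Finset.ne_of_mem_erase ht
    have hct : γ.c t = CEntry.num a := by
      simpa using htmem
    rcases lt_or_gt_of_ne htne with h | h
    · have hpair : γ.IsPair t u := ⟨h, hct.trans he.symm, by rw [hct]; rfl⟩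
      have hts : (t : ℕ) < s := h
      have hres : ((⟨s, hs⟩ : Fin n) : ℕ) < s := hf t u hpair hts
      simp at hres
    · exact ⟨t, h, he.trans hct.symm, by rw [he]; rfl⟩

lemma contain (γ : Clan n p q) (havoid : ¬ γ.Includes1212) {s : ℕ} (hf : Fresh γ s)
    (hs : s < n) {t : Fin n} (hp : γ.IsPair ⟨s, hs⟩ t) {u v : Fin n}
    (huv : γ.IsPair u v) (hu : (u : ℕ) ≤ (t : ℕ)) :
    (v : ℕ) ≤ (t : ℕ) ∨ (u : ℕ) < s := by
  rcases lt_trichotomy (u : ℕ) s with h | h | h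
  · exact Or.inr h
  · have hue : u = ⟨s, hs⟩ := Fin.ext h
    subst hue
    left
    rw [pair_unique_right γ huv hp]
  · left
    rcases eq_or_lt_of_le hu with heq | hlt
    · exact absurd (no_pair_at_right γ hp ((Fin.ext heq : u = t) ▸ huv)) not_false
    · by_contra hv
      push_neg at hv
      exact cross_impossible γ havoid hp huv h hlt hv

lemma fresh_succ (γ : Clan n p q) (havoid : ¬ γ.Includes1212) {s : ℕ} (hf : Fresh γ s)
    (hs : s < n) {t : Fin n} (hp : γ.IsPair ⟨s, hs⟩ t) : Fresh γ ((t : ℕ) + 1) := by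
  intro i j hij hi
  have hst : s < (t : ℕ) := hp.1
  rcases contain γ havoid hf hs hp hij (by omega) with h | h
  · omega
  · have := hf i j hij h
    omega

lemma blocks_aux (γ : Clan n p q) (havoid : ¬ γ.Includes1212)
    (hsigns : ∀ k : Fin n, (γ.c k).isSign = true →
      ∃ i j : Fin n, γ.IsPair i j ∧ i < k ∧ k < j) :
    ∀ m s (hs : s < n), n - s ≤ m → Fresh γ s →
    ∃ r : ℕ, ∃ I J : Fin (r + 1) → Fin n,
      (I 0 : ℕ) = s ∧
      (J (Fin.last r) : ℕ) = n - 1 ∧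
      (∀ k, γ.IsPair (I k) (J k)) ∧
      (∀ k : Fin r, (J k.castSucc : ℕ) + 1 = (I k.succ : ℕ)) ∧
      (∀ u v : Fin n, γ.IsPair u v → s ≤ (u : ℕ) → ∃ k, I k ≤ u ∧ v ≤ J k) := by
  intro m
  induction m with
  | zero => intro s hs hm _; omega
  | succ m ih =>
    intro s hs hm hf
    obtain ⟨t, hp⟩ := exists_pair_start γ hsigns hf hs
    have hst : s < (t : ℕ) := hp.1
    by_cases hend : (t : ℕ) + 1 < n
    · have hf' : Fresh γ ((t : ℕ) + 1) := fresh_succ γ havoid hf hs hp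
      obtain ⟨r, I, J, h0, hlast, hpk, hcons, hcov⟩ :=
        ih ((t : ℕ) + 1) hend (by omega) hf'
      refine ⟨r + 1, Fin.cons ⟨s, hs⟩ I, Fin.cons t J, ?_, ?_, ?_, ?_, ?_⟩
      · simp
      · rw [← Fin.succ_last, Fin.cons_succ]; exact hlast
      · intro k
        refine Fin.cases ?_ ?_ k
        · simpa using hp
        · intro j; simpa using hpk j
      · intro k
        refine Fin.cases ?_ ?_ k
        · simp only [Fin.castSucc_zero, Fin.cons_zero, Fin.cons_succ]
          omega
        · intro j
          rw [← Fin.succ_castSucc, Fin.cons_succ, Fin.cons_succ]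
          exact hcons j
      · intro u v huv hu
        by_cases hut : (u : ℕ) ≤ (t : ℕ)
        · refine ⟨0, ?_, ?_⟩
          · rw [Fin.cons_zero]; exact Fin.le_def.mpr hu
          · rw [Fin.cons_zero]
            rcases contain γ havoid hf hs hp huv hut with h | h
            · exact Fin.le_def.mpr h
            · omega
        · obtain ⟨k, hk1, hk2⟩ := hcov u v huv (by omega)
          exact ⟨k.succ, by rw [Fin.cons_succ]; exact hk1,
            by rw [Fin.cons_succ]; exact hk2⟩
    · have htn : (t : ℕ) = n - 1 := by have := t.isLt; omega
      refine ⟨0, fun _ => ⟨s, hs⟩, fun _ => t, rfl, htn, fun _ => hp,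
        fun k => k.elim0, ?_⟩
      intro u v huv hu
      refine ⟨0, Fin.le_def.mpr hu, ?_⟩
      have hut : (u : ℕ) ≤ (t : ℕ) := by have := u.isLt; omega
      rcases contain γ havoid hf hs hp huv hut with h | h
      · exact Fin.le_def.mpr h
      · omega

end BlockAux

/-- If a clan avoids `(1,2,1,2)` and every sign entry lies strictly
between the two positions of some pair, then the clan is a concatenation of consecutive
blocks, each beginning and ending with the two occurrences of a single number, and every
pair has both its positions inside a single block. -/
theorem block_decomposition {n p q : ℕ} (hn : 0 < n) (γ : Clan n p q)
    (havoid : ¬ γ.Includes1212)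
    (hsigns : ∀ k : Fin n, (γ.c k).isSign = true →
      ∃ i j : Fin n, γ.IsPair i j ∧ i < k ∧ k < j) :
    ∃ r : ℕ, ∃ I J : Fin (r + 1) → Fin n,
      (I 0 : ℕ) = 0 ∧
      (J (Fin.last r) : ℕ) = n - 1 ∧
      (∀ k, γ.IsPair (I k) (J k)) ∧
      (∀ k : Fin r, (J k.castSucc : ℕ) + 1 = (I k.succ : ℕ)) ∧
      (∀ s t : Fin n, γ.IsPair s t → ∃ k, I k ≤ s ∧ t ≤ J k) := by
  obtain ⟨r, I, J, h0, hlast, hpk, hcons, hcov⟩ :=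
    blocks_aux γ havoid hsigns n 0 hn (by omega) (fun i j _ hi => by omega)
  exact ⟨r, I, J, h0, hlast, hpk, hcons, fun s t hst => hcov s t hst (Nat.zero_le _)⟩
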